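/- The set of real numbers of VC dimension at most d is uncountable if and only if d ≥ 2. -/

import Mathlib

/-- The family of subsets of `ℕ` arising from finite contiguous substrings of `S`:
a substring starting at `t` of length `w` yields `{i | i < w ∧ S (t+i) = true}`. -/
def subFam (S : ℕ → Bool) : Set (Set ℕ) :=
  {A | ∃ t w : ℕ, A = {i | i < w ∧ S (t + i) = true}}

/-- The subfamily arising from substrings of a fixed length `w`. -/
def subFamW (S : ℕ → Bool) (w : ℕ) : Set (Set ℕ) :=
  {A | ∃ t : ℕ, A = {i | i < w ∧ S (t + i) = true}}

/-- A family of subsets of `ℕ` shatters a finite set `A`. -/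
def FamShatters (F : Set (Set ℕ)) (A : Finset ℕ) : Prop :=
  ∀ B ⊆ A, ∃ C ∈ F, ∀ i ∈ A, (i ∈ C ↔ i ∈ B)

/-- The VC dimension of a family of subsets of `ℕ`, as an extended natural. -/
noncomputable def vcDimF (F : Set (Set ℕ)) : ℕ∞ :=
  sSup {n : ℕ∞ | ∃ A : Finset ℕ, FamShatters F A ∧ (A.card : ℕ∞) = n}

/-- The VC dimension of a binary string. -/
noncomputable def VCdim (S : ℕ → Bool) : ℕ∞ := vcDimF (subFam S)

/-- The sliding-window VC dimension of a binary string. -/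
noncomputable def SWdim (S : ℕ → Bool) : ℕ∞ := ⨆ w : ℕ, vcDimF (subFamW S w)

/-- The binary digit string of a real number `r`: sign and binary point are ignored,
the integer digits (most significant first) are followed by the fractional digits, and
for dyadic rationals the representation ending in `0*` is chosen. -/
noncomputable def rdigit (r : ℝ) (n : ℕ) : Bool :=
  let x : ℝ := |r|
  let m : ℤ := if x < 1 then 0 else (Nat.log 2 ⌊x⌋₊ + 1 : ℤ)
  decide (⌊x * 2 ^ ((n : ℤ) + 1 - m)⌋ % 2 = 1)

/-- The VC dimension of a real number: the VC dimension of its binary digit string. -/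
noncomputable def VCdimR (r : ℝ) : ℕ∞ := VCdim (rdigit r)

/-!
For `d ≤ 1`: a string of VC dimension at most 1 cannot shatter a pair `{0, g}`. Taking `g` to
be the gap between its first two ones, this makes the support closed under subtracting `g`, so
the support is finite or an arithmetic progression. There are only countably many such strings,
and each is the digit string of only countably many reals, since a real is determined by its
digits, its sign and the position of its binary point.

For `d ≥ 2`: if the support of a string is a Sidon set, two windows that both have ones at
relative positions `j < k` start at the same place, so no three-element set is shattered. The
strings supported on `{2 ^ i | i ∈ A}` are of this kind; having infinitely many zeros, they are
digit strings of reals, and there are uncountably many of them.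
-/

namespace Real

variable {b : ℕ}

theorem ofDigits_lt_one (hb : 1 < b) {a : ℕ → Fin b} (ha : ∃ n, (a n : ℕ) ≠ b - 1) :
    ofDigits a < 1 := by
  obtain ⟨n, hn⟩ := ha
  rw [← ofDigits_const_last_eq_one' hb, ofDigits, ofDigits]
  have hle : ∀ i, (a i : ℕ) ≤ b - 1 := fun i => by have := (a i).isLt; omega
  refine Summable.tsum_lt_tsum_of_nonneg (i := n) (fun _ => ofDigitsTerm_nonneg)
    (fun i => ?_) ?_ summable_ofDigitsTerm <;> unfold ofDigitsTerm
  · gcongr; exact_mod_cast hle i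
  · gcongr; exact_mod_cast (hle n).lt_of_ne hn

theorem mul_ofDigits_shift (a : ℕ → Fin b) (n : ℕ) :
    b * ofDigits (fun i => a (i + n)) = a n + ofDigits (fun i => a (i + (n + 1))) := by
  have hb : (b : ℝ) ≠ 0 := by have := (a 0).pos; positivity
  rw [ofDigits_eq_sum_add_ofDigits _ 1]
  simp only [Finset.sum_range_one, ofDigitsTerm, zero_add, pow_one, add_assoc, add_comm 1 n]
  field_simp

theorem exists_ofDigits_mul_pow_succ_eq (a : ℕ → Fin b) (n : ℕ) :
    ∃ N : ℕ,
      ofDigits a * b ^ (n + 1) = (b * N + a n : ℕ) + ofDigits (fun i => a (i + (n + 1))) := by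
  induction n with
  | zero => exact ⟨0, by simpa [mul_comm] using mul_ofDigits_shift a 0⟩
  | succ n ih =>
    obtain ⟨N, hN⟩ := ih
    refine ⟨b * N + a n, ?_⟩
    rw [pow_succ, ← mul_assoc, hN, add_mul, mul_comm (ofDigits _), mul_ofDigits_shift]
    push_cast
    ring

theorem digits_ofDigits [NeZero b] (hb : 1 < b) (a : ℕ → Fin b)
    (ha : ∀ m, ∃ n ≥ m, (a n : ℕ) ≠ b - 1) : digits (ofDigits a) b = a := by
  funext n
  obtain ⟨N, hN⟩ := exists_ofDigits_mul_pow_succ_eq a n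
  have htail : ofDigits (fun i => a (i + (n + 1))) < 1 := by
    obtain ⟨m, hm, hne⟩ := ha (n + 1)
    exact ofDigits_lt_one hb ⟨m - (n + 1), by rwa [Nat.sub_add_cancel hm]⟩
  have hfloor : ⌊ofDigits a * b ^ (n + 1)⌋₊ = b * N + a n := by
    rw [Nat.floor_eq_iff (mul_nonneg (ofDigits_nonneg a) (by positivity)), hN]
    constructor <;> linarith [ofDigits_nonneg (fun i => a (i + (n + 1)))]
  ext
  simp [digits, hfloor, Nat.mod_eq_of_lt]

end Real

noncomputable def numIntDigits (x : ℝ) : ℤ :=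
  if x < 1 then 0 else (Nat.log 2 ⌊x⌋₊ + 1 : ℤ)

theorem mul_two_zpow_neg_numIntDigits_mem_Ico {x : ℝ} (hx : 0 ≤ x) :
    x * 2 ^ (-numIntDigits x) ∈ Set.Ico 0 1 := by
  refine ⟨by positivity, ?_⟩
  rw [zpow_neg, ← div_eq_mul_inv, div_lt_one (by positivity), numIntDigits]
  split_ifs with h
  · simpa using h
  · have := Int.lt_zpow_succ_log_self one_lt_two x
    rwa [Int.log_of_one_le_right 2 (not_lt.mp h), Nat.cast_ofNat] at this

theorem rdigit_eq_digits (r : ℝ) (n : ℕ) :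
    rdigit r n = decide ((Real.digits (|r| * 2 ^ (-numIntDigits |r|)) 2 n : ℕ) = 1) := by
  have hscale : |r| * (2 : ℝ) ^ ((n : ℤ) + 1 - numIntDigits |r|) =
      |r| * 2 ^ (-numIntDigits |r|) * 2 ^ (n + 1) := by
    rw [mul_assoc, ← zpow_natCast, ← zpow_add₀ two_ne_zero]
    push_cast
    ring_nf
  change decide (⌊|r| * (2 : ℝ) ^ ((n : ℤ) + 1 - numIntDigits |r|)⌋ % 2 = 1) = _
  rw [hscale, ← Int.natCast_floor_eq_floor (by positivity)]
  refine decide_eq_decide.mpr ?_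
  simp only [Real.digits, Fin.val_ofNat, Nat.cast_ofNat]
  omega

theorem countable_rdigit_preimage_singleton (S : ℕ → Bool) :
    (rdigit ⁻¹' {S}).Countable := by
  refine (Set.mapsTo_univ (fun r => (SignType.sign r, numIntDigits |r|)) _).countable_of_injOn
    ?_ Set.countable_univ
  intro r hr r' hr' hkey
  simp only [Prod.ext_iff] at hkey
  have hdigits : Real.digits (|r| * 2 ^ (-numIntDigits |r|)) 2 =
      Real.digits (|r'| * 2 ^ (-numIntDigits |r|)) 2 := by
    funext n
    have hdigit := congrFun (hr.trans hr'.symm) n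
    rw [rdigit_eq_digits, rdigit_eq_digits, ← hkey.2, decide_eq_decide] at hdigit
    have := (Real.digits (|r| * 2 ^ (-numIntDigits |r|)) 2 n).isLt
    have := (Real.digits (|r'| * 2 ^ (-numIntDigits |r|)) 2 n).isLt
    ext
    omega
  have habs : |r| = |r'| := by
    have hu := Real.ofDigits_digits one_lt_two
      (mul_two_zpow_neg_numIntDigits_mem_Ico (abs_nonneg r))
    have hu' := Real.ofDigits_digits one_lt_two
      (mul_two_zpow_neg_numIntDigits_mem_Ico (abs_nonneg r'))
    rw [hdigits] at hu
    rw [← hkey.2] at hu'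
    exact mul_right_cancel₀ (zpow_ne_zero _ two_ne_zero) (hu.symm.trans hu')
  rw [← sign_mul_abs r, ← sign_mul_abs r', hkey.1, habs]

theorem Set.Countable.preimage_rdigit {T : Set (ℕ → Bool)} (hT : T.Countable) :
    (rdigit ⁻¹' T).Countable := by
  rw [← Set.biUnion_preimage_singleton]
  exact hT.biUnion fun S _ => countable_rdigit_preimage_singleton S

theorem exists_rdigit_eq (S : ℕ → Bool) (hS : ∀ m, ∃ n ≥ m, S n = false) :
    ∃ r, rdigit r = S := by
  set a : ℕ → Fin 2 := fun n => if S n then 1 else 0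
  have ha : ∀ m, ∃ n ≥ m, (a n : ℕ) ≠ 2 - 1 := fun m => by
    obtain ⟨n, hn, hSn⟩ := hS m
    exact ⟨n, hn, by simp [a, hSn]⟩
  have hlt : Real.ofDigits a < 1 := by
    obtain ⟨n, -, hn⟩ := ha 0
    exact Real.ofDigits_lt_one one_lt_two ⟨n, hn⟩
  have hm : numIntDigits |Real.ofDigits a| = 0 := by
    rw [abs_of_nonneg (Real.ofDigits_nonneg a), numIntDigits, if_pos hlt]
  refine ⟨Real.ofDigits a, funext fun n => ?_⟩
  rw [rdigit_eq_digits, hm, neg_zero, zpow_zero, mul_one, abs_of_nonneg (Real.ofDigits_nonneg a),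
    Real.digits_ofDigits one_lt_two a ha]
  cases h : S n <;> simp [a, h]

theorem vcDimF_le_iff (F : Set (Set ℕ)) (n : ℕ) :
    vcDimF F ≤ n ↔ ∀ A : Finset ℕ, FamShatters F A → A.card ≤ n := by
  simp only [vcDimF, sSup_le_iff, Set.mem_ofPred_eq, forall_exists_index, and_imp]
  constructor
  · intro h A hA
    exact_mod_cast h _ A hA rfl
  · rintro h _ A hA rfl
    exact_mod_cast h A hA

theorem FamShatters.mono {F : Set (Set ℕ)} {A A' : Finset ℕ} (h : FamShatters F A)
    (hA' : A' ⊆ A) : FamShatters F A' := fun B hB =>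
  let ⟨C, hC, hCA⟩ := h B (hB.trans hA')
  ⟨C, hC, fun i hi => hCA i (hA' hi)⟩

theorem eq_true_of_vcdim_le_one {S : ℕ → Bool} (h : VCdim S ≤ 1) {a g t : ℕ} (hg : 0 < g)
    (ha : S a = true) (hag : S (a + g) = true) (htg : S (t + g) = true) : S t = true := by
  by_contra ht
  -- otherwise the windows of length `g + 1` at `a` and `t`, of length 1 at `a`, and the empty
  -- window shatter `{0, g}`
  have hshatters : FamShatters (subFam S) {0, g} := by
    intro B _
    by_cases h0 : 0 ∈ B <;> by_cases hgB : g ∈ B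
    · exact ⟨_, ⟨a, g + 1, rfl⟩, by simp [h0, hgB, ha, hag]⟩
    · exact ⟨_, ⟨a, 1, rfl⟩, by simp [h0, hgB, ha, hg.ne']⟩
    · exact ⟨_, ⟨t, g + 1, rfl⟩, by simp [h0, hgB, ht, htg]⟩
    · exact ⟨_, ⟨0, 0, rfl⟩, by simp [h0, hgB]⟩
  have := (vcDimF_le_iff _ 1).mp h _ hshatters
  simp [Finset.card_pair hg.ne] at this

theorem sub_mul_mem_of_sub_mem {T : Set ℕ} {g : ℕ} (hsub : ∀ n ∈ T, g ≤ n → n - g ∈ T)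
    {n : ℕ} (hn : n ∈ T) (k : ℕ) (hk : k * g ≤ n) : n - k * g ∈ T := by
  induction k with
  | zero => simpa using hn
  | succ k ih =>
    have := hsub _ (ih (by nlinarith)) (by rw [add_mul] at hk; omega)
    rwa [Nat.sub_sub, ← Nat.succ_mul] at this

theorem eq_setOf_add_mul_of_sub_mem {T : Set ℕ} {p g : ℕ} (hT : T.Infinite) (hg : 0 < g)
    (hgap : ∀ n ∈ T, n < p + g → n = p) (hsub : ∀ n ∈ T, g ≤ n → n - g ∈ T) :
    T = {n | ∃ k, n = p + k * g} := by
  have hsubset : T ⊆ {n | ∃ k, n = p + k * g} := by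
    intro n hn
    have hmod : n % g ∈ T := by
      have := sub_mul_mem_of_sub_mem hsub hn (n / g) (Nat.div_mul_le_self n g)
      rwa [← Nat.mod_eq_sub_div_mul] at this
    have := hgap _ hmod (by have := Nat.mod_lt n hg; omega)
    exact ⟨n / g, by rw [← this, mul_comm]; exact (Nat.mod_add_div n g).symm⟩
  refine hsubset.antisymm ?_
  rintro _ ⟨k, rfl⟩
  obtain ⟨m, hm, hlt⟩ := hT.exists_gt (p + k * g)
  obtain ⟨k', rfl⟩ := hsubset hm
  have hkk' : k * g ≤ k' * g := Nat.mul_le_mul_right g (by by_contra! h; nlinarith)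
  have := sub_mul_mem_of_sub_mem hsub hm (k' - k) (by rw [Nat.sub_mul]; omega)
  convert this using 1
  rw [Nat.sub_mul]
  omega

theorem exists_support_eq_setOf_add_mul_of_vcdim_le_one {S : ℕ → Bool} (h : VCdim S ≤ 1)
    (hinf : {n | S n = true}.Infinite) :
    ∃ p g, 0 < g ∧ {n | S n = true} = {n | ∃ k, n = p + k * g} := by
  obtain ⟨p, hp_def⟩ : ∃ p, Nat.nth (fun n => S n = true) 0 = p := ⟨_, rfl⟩
  obtain ⟨q, hq_def⟩ : ∃ q, Nat.nth (fun n => S n = true) 1 = q := ⟨_, rfl⟩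
  have hpq : p < q := hp_def ▸ hq_def ▸ (Nat.nth_lt_nth hinf).mpr zero_lt_one
  have hp : S p = true := hp_def ▸ Nat.nth_mem_of_infinite hinf 0
  have hq : S (p + (q - p)) = true := by
    rw [Nat.add_sub_cancel' hpq.le, ← hq_def]
    exact Nat.nth_mem_of_infinite hinf 1
  have hgap : ∀ n ∈ {n | S n = true}, n < p + (q - p) → n = p := fun n hn hnq =>
    le_antisymm (hp_def ▸ Nat.le_nth_of_lt_nth_succ (hq_def ▸ (by omega)) hn)
      (hp_def ▸ Nat.nth_zero ▸ Nat.sInf_le hn)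
  refine ⟨p, q - p, by omega,
    eq_setOf_add_mul_of_sub_mem hinf (by omega) hgap fun n hn hgn => ?_⟩
  exact eq_true_of_vcdim_le_one h (by omega) hp hq (by rwa [Nat.sub_add_cancel hgn])

theorem countable_setOf_vcdim_le_one : {S : ℕ → Bool | VCdim S ≤ 1}.Countable := by
  have hsupport : Function.Injective fun S : ℕ → Bool => {n | S n = true} :=
    fun S S' h => funext fun n => Bool.eq_iff_iff.mpr (Set.ext_iff.mp h n)
  have hprogressions := Set.countable_range fun pg : ℕ × ℕ => {n | ∃ k, n = pg.1 + k * pg.2}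
  refine ((Set.Countable.ofPred_finite.union hprogressions).preimage hsupport).mono fun S hS => ?_
  by_cases hfin : {n | S n = true}.Finite
  · exact Or.inl hfin
  · obtain ⟨p, g, -, hpg⟩ := exists_support_eq_setOf_add_mul_of_vcdim_le_one hS hfin
    exact Or.inr ⟨(p, g), hpg.symm⟩

/-- Positive differences of elements of `T` are distinct: `b - a = d - c` forces `a = c`. -/
def IsSidon (T : Set ℕ) : Prop :=
  ∀ ⦃a b c d⦄, a ∈ T → b ∈ T → c ∈ T → d ∈ T →
    a < b → c < d → b + c = d + a → a = c

theorem IsSidon.mono {T T' : Set ℕ} (h : IsSidon T) (hT' : T' ⊆ T) : IsSidon T' :=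
  fun _ _ _ _ ha hb hc hd => h (hT' ha) (hT' hb) (hT' hc) (hT' hd)

theorem isSidon_range_two_pow : IsSidon (Set.range (2 ^ · : ℕ → ℕ)) := by
  rintro _ _ _ _ ⟨i, rfl⟩ ⟨j, rfl⟩ ⟨k, rfl⟩ ⟨l, rfl⟩ hij hkl h
  rw [Nat.pow_lt_pow_iff_right one_lt_two] at hij hkl
  wlog hik : i ≤ k generalizing i j k l
  · exact (this k l i j hkl hij h.symm (by omega)).symm
  obtain rfl | hik := hik.eq_or_lt
  · rfl
  have hdvd : 2 ^ (i + 1) ∣ 2 ^ l + 2 ^ i :=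
    h ▸ dvd_add (pow_dvd_pow 2 hij) (pow_dvd_pow 2 hik)
  have := Nat.le_of_dvd (by positivity) ((Nat.dvd_add_right (pow_dvd_pow 2 (by omega))).mp hdvd)
  rw [pow_succ] at this
  have : 0 < 2 ^ i := by positivity
  omega

theorem not_famShatters_of_isSidon {S : ℕ → Bool} (hS : IsSidon {n | S n = true})
    {i j k : ℕ} (hij : i < j) (hjk : j < k) : ¬ FamShatters (subFam S) {i, j, k} := by
  intro hshatters
  obtain ⟨_, ⟨t, w, rfl⟩, hall⟩ := hshatters {i, j, k} subset_rfl
  obtain ⟨_, ⟨t', w', rfl⟩, hjk'⟩ := hshatters {j, k} (by simp)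
  have hti := ((hall i (by simp)).mpr (by simp)).2
  have htj := ((hall j (by simp)).mpr (by simp)).2
  have htk := ((hall k (by simp)).mpr (by simp)).2
  have ht'j := ((hjk' j (by simp)).mpr (by simp)).2
  obtain ⟨hkw', ht'k⟩ := (hjk' k (by simp)).mpr (by simp)
  -- both windows contain ones at distance `k - j`, so they start at the same place
  have htt' : t = t' := by
    have := hS htj htk ht'j ht'k (by omega) (by omega) (by omega)
    omega
  subst htt'
  have := (hjk' i (by simp)).mp ⟨by omega, hti⟩
  simp only [Finset.mem_insert, Finset.mem_singleton] at this
  omega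

theorem vcdim_le_two_of_isSidon {S : ℕ → Bool} (hS : IsSidon {n | S n = true}) :
    VCdim S ≤ 2 := by
  refine (vcDimF_le_iff _ 2).mpr fun A hA => ?_
  by_contra! hcard
  let e := A.orderEmbOfFin rfl
  have he : ∀ m : Fin A.card, e m ∈ A := A.orderEmbOfFin_mem rfl
  exact not_famShatters_of_isSidon hS
    (e.strictMono (Fin.mk_lt_mk (hx := by omega) (hy := by omega) |>.mpr zero_lt_one))
    (e.strictMono (Fin.mk_lt_mk (hx := by omega) (hy := by omega) |>.mpr one_lt_two))
    (hA.mono (by simp [Finset.insert_subset_iff, he]))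

open Classical in
noncomputable def powTwoString (A : Set ℕ) (n : ℕ) : Bool := decide (n ∈ (2 ^ ·) '' A)

theorem powTwoString_injective : Function.Injective powTwoString := by
  intro A A' h
  ext i
  have := congrFun h (2 ^ i)
  simpa [powTwoString, Nat.pow_right_injective le_rfl |>.eq_iff] using this

theorem isSidon_support_powTwoString (A : Set ℕ) : IsSidon {n | powTwoString A n = true} :=
  isSidon_range_two_pow.mono fun n hn => by
    obtain ⟨i, -, rfl⟩ := by simpa [powTwoString] using hn
    exact ⟨i, rfl⟩

theorem exists_powTwoString_eq_false (A : Set ℕ) (m : ℕ) :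
    ∃ n ≥ m, powTwoString A n = false := by
  refine ⟨2 * m + 3, by omega, ?_⟩
  simp only [powTwoString, decide_eq_false_iff_not, Set.mem_image, not_exists, not_and]
  intro i _ hi
  cases i with
  | zero => omega
  | succ i => rw [pow_succ] at hi; omega

instance : Uncountable (Set ℕ) := ⟨fun ⟨f, hf⟩ => Function.cantor_injective f hf⟩

/-- The set of reals of VC dimension at most `d` is uncountable iff
`d ≥ 2`. -/
theorem vcdimR_le_d_uncountable_iff (d : ℕ) :
    ¬ {r : ℝ | VCdimR r ≤ (d : ℕ∞)}.Countable ↔ 2 ≤ d := by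
  refine ⟨fun h => ?_, fun hd hcount => ?_⟩
  · by_contra! hd
    exact h (countable_setOf_vcdim_le_one.preimage_rdigit.mono
      fun r (hr : VCdim (rdigit r) ≤ d) => hr.trans (by exact_mod_cast Nat.le_of_lt_succ hd))
  · have hrange : Set.range powTwoString ⊆ rdigit '' {r | VCdimR r ≤ d} := by
      rintro _ ⟨A, rfl⟩
      obtain ⟨r, hr⟩ := exists_rdigit_eq _ (exists_powTwoString_eq_false A)
      refine ⟨r, ?_, hr⟩
      change VCdim (rdigit r) ≤ d
      rw [hr]
      exact (vcdim_le_two_of_isSidon (isSidon_support_powTwoString A)).trans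
        (by exact_mod_cast hd)
    exact Set.not_countable_univ
      (by simpa using ((hcount.image rdigit).mono hrange).preimage powTwoString_injective)
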